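/- Let C, C' ∈ GL⁺(H) commute with each other and with each T_i and with K. If {T_i}_{i∈I} is a K-operator frame for End_A*(H) with bounds A, B, then {T_i}_{i∈I} is a (C,C')-controlled K-operator frame for End_A*(H), with bounds A·m and B·‖(CC')^{1/2}‖², where m > 0 is a lower bound of (CC')^{1/2} with respect to the inner product. -/

import Mathlib

/-!
Write `D = (CC')^{1/2}`. Since `C` and `C'` commute with `T i` and `C` is self-adjoint,
`⟪T i (C x), T i (C' x)⟫ = ⟪T i x, C C' T i x⟫ = ⟪D T i x, D T i x⟫`, which lies between
`m • ⟪T i x, T i x⟫` and `‖D‖² • ⟪T i x, T i x⟫`. Summing over `i` and applying the frame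
bounds gives the controlled frame bounds.

The estimate `⟪D y, D y⟫ ≤ ‖D‖² • ⟪y, y⟫` is proved without a C*-algebra of adjointable
operators: for a self-adjoint `S` with `‖S‖ < 1`, the defect `⟪z, z⟫ - ⟪S z, S z⟫` does not
increase under `z ↦ S z`, since the difference is `⟪z - S² z, z - S² z⟫ ≥ 0`, and it tends to
`0` along `Sⁿ y`; hence it is nonnegative. Apply this to `c⁻¹ • D` and let `c ↓ ‖D‖`.
-/

open scoped RightActions

variable {A : Type*} [CStarAlgebra A] [PartialOrder A] [StarOrderedRing A]
variable {H : Type*} [NormedAddCommGroup H] [NormedSpace ℂ H] [CompleteSpace H]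
  [SMul A H] [CStarModule A H]

/-- `S` is the adjoint of `T` with respect to the `A`-valued inner product. -/
def IsAdjointOf (T S : H →L[ℂ] H) : Prop :=
  ∀ x y : H, (inner A (T x) y : A) = inner A x (S y)

/-- `C` belongs to `GL⁺(H)` : invertible (with adjointable inverse), self-adjoint
and positive with respect to the `A`-valued inner product. -/
def MemGLPlus (C : H →L[ℂ] H) : Prop :=
  (∃ Ci : H →L[ℂ] H, Ci.comp C = ContinuousLinearMap.id ℂ H ∧
      C.comp Ci = ContinuousLinearMap.id ℂ H) ∧
  (∀ x y : H, (inner A (C x) y : A) = inner A x (C y)) ∧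
  (∀ x : H, (0 : A) ≤ inner A x (C x))

section Summation

variable {ι : Type*}

lemma CStarAlgebra.summable_of_nonneg_of_le {f g : ι → A} (hf : ∀ i, 0 ≤ f i)
    (hfg : ∀ i, f i ≤ g i) (hg : Summable g) : Summable f := by
  rw [summable_iff_vanishing_norm] at hg ⊢
  intro ε hε
  obtain ⟨s, hs⟩ := hg ε hε
  refine ⟨s, fun t ht => lt_of_le_of_lt ?_ (hs t ht)⟩
  exact CStarAlgebra.norm_le_norm_of_nonneg_of_le (Finset.sum_nonneg fun i _ => hf i)
    (Finset.sum_le_sum fun i _ => hfg i)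

variable {f g : ι → A} {m c : ℝ}

lemma summable_iff_of_smul_le_of_le_smul (hm : 0 < m) (hf : ∀ i, 0 ≤ f i)
    (hmg : ∀ i, m • f i ≤ g i) (hgc : ∀ i, g i ≤ c • f i) : Summable f ↔ Summable g := by
  refine ⟨fun hsf => ?_, fun hsg => ?_⟩
  · exact CStarAlgebra.summable_of_nonneg_of_le
      (fun i => (smul_nonneg hm.le (hf i)).trans (hmg i)) hgc (hsf.const_smul c)
  · refine CStarAlgebra.summable_of_nonneg_of_le hf (fun i => ?_) (hsg.const_smul m⁻¹)
    rw [← inv_smul_smul₀ hm.ne' (f i)]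
    exact smul_le_smul_of_nonneg_left (hmg i) (inv_nonneg.mpr hm.le)

/-- `f` and `g` are summable together, so the junk value `∑' = 0` never meets a genuine sum. -/
lemma smul_tsum_le_tsum_and_tsum_le_smul_tsum (hm : 0 < m) (hf : ∀ i, 0 ≤ f i)
    (hmg : ∀ i, m • f i ≤ g i) (hgc : ∀ i, g i ≤ c • f i) :
    m • ∑' i, f i ≤ ∑' i, g i ∧ ∑' i, g i ≤ c • ∑' i, f i := by
  have hfg := summable_iff_of_smul_le_of_le_smul hm hf hmg hgc
  by_cases hsf : Summable f
  · have hsg := hfg.mp hsf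
    rw [← hsf.tsum_const_smul, ← hsf.tsum_const_smul]
    exact ⟨(hsf.const_smul m).tsum_le_tsum hmg hsg, hsg.tsum_le_tsum hgc (hsf.const_smul c)⟩
  · simp [tsum_eq_zero_of_not_summable hsf, tsum_eq_zero_of_not_summable (hfg.not.mp hsf)]

end Summation

namespace IsAdjointOf

variable {S : H →L[ℂ] H}

omit [CompleteSpace H]

lemma inner_apply_self_sub_le (hS : IsAdjointOf (A := A) S S) (z : H) :
    (inner A (S z) (S z) : A) - inner A (S (S z)) (S (S z)) ≤
      inner A z z - inner A (S z) (S z) := by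
  have h := CStarModule.inner_self_nonneg (A := A) (x := z - S (S z))
  simp only [CStarModule.inner_sub_left, CStarModule.inner_sub_right, ← hS z (S z),
    hS (S z) z] at h
  exact sub_nonneg.mp h

lemma inner_apply_self_le_of_norm_lt_one (hS : IsAdjointOf (A := A) S S) (hS1 : ‖S‖ < 1)
    (y : H) : (inner A (S y) (S y) : A) ≤ inner A y y := by
  set φ : H → A := fun z => inner A z z - inner A (S z) (S z)
  have hφ : Continuous φ := by
    have := CStarModule.continuous_inner (A := A) (E := H)
    fun_prop
  have hmono : ∀ n : ℕ, φ ((S ^ n) y) ≤ φ y := by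
    intro n
    induction n with
    | zero => simp
    | succ n ih =>
      rw [pow_succ']
      exact (hS.inner_apply_self_sub_le _).trans ih
  have hlim : Filter.Tendsto (fun n : ℕ => (S ^ n) y) Filter.atTop (nhds 0) :=
    ((ContinuousLinearMap.apply ℂ H y).continuous.tendsto 0).comp
      (tendsto_pow_atTop_nhds_zero_of_norm_lt_one hS1)
  have h0 : φ 0 ≤ φ y := le_of_tendsto' ((hφ.tendsto 0).comp hlim) hmono
  simpa [φ] using h0

lemma inner_apply_self_le_norm_sq_smul (hS : IsAdjointOf (A := A) S S) (y : H) :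
    (inner A (S y) (S y) : A) ≤ ‖S‖ ^ 2 • inner A y y := by
  have hbound : ∀ c > ‖S‖, (inner A (S y) (S y) : A) ≤ c ^ 2 • inner A y y := by
    intro c hc
    have hc0 : 0 < c := (norm_nonneg S).trans_lt hc
    have hcS : IsAdjointOf (A := A) (c⁻¹ • S) (c⁻¹ • S) := fun u v => by
      simp only [smul_apply, CStarModule.inner_smul_left_real,
        CStarModule.inner_smul_right_real, hS u v]
    have hcS1 : ‖c⁻¹ • S‖ < 1 := by
      rw [norm_smul, Real.norm_of_nonneg (inv_nonneg.mpr hc0.le), inv_mul_lt_one₀ hc0]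
      exact hc
    have h := hcS.inner_apply_self_le_of_norm_lt_one hcS1 y
    simp only [smul_apply, CStarModule.inner_smul_left_real,
      CStarModule.inner_smul_right_real, smul_smul] at h
    calc (inner A (S y) (S y) : A) = c ^ 2 • (c⁻¹ * c⁻¹) • inner A (S y) (S y) := by
          rw [smul_smul, ← mul_inv, ← sq, mul_inv_cancel₀ (pow_ne_zero 2 hc0.ne'), one_smul]
      _ ≤ c ^ 2 • inner A y y := smul_le_smul_of_nonneg_left h (sq_nonneg c)
  have hlim : Filter.Tendsto (fun c : ℝ => c ^ 2 • (inner A y y : A))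
      (nhdsWithin ‖S‖ (Set.Ioi ‖S‖)) (nhds (‖S‖ ^ 2 • inner A y y)) :=
    tendsto_nhdsWithin_of_tendsto_nhds ((continuous_pow 2).smul continuous_const).continuousAt
  exact ge_of_tendsto hlim (eventually_nhdsWithin_of_forall hbound)

omit [StarOrderedRing A] in
lemma inner_apply_apply_eq_inner_apply_self {C C' D : H →L[ℂ] H}
    (hC : IsAdjointOf (A := A) C C) (hD : IsAdjointOf (A := A) D D) (hD2 : D.comp D = C.comp C')
    (y : H) : (inner A (C y) (C' y) : A) = inner A (D y) (D y) := by
  rw [hC, hD, ← ContinuousLinearMap.comp_apply, ← hD2, ContinuousLinearMap.comp_apply]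

end IsAdjointOf

theorem stmt_2_general {ι : Type*} (C C' Ks D : H →L[ℂ] H) (T : ι → H →L[ℂ] H)
    (hC : MemGLPlus (A := A) C)
    (hCT : ∀ i, C.comp (T i) = (T i).comp C)
    (hC'T : ∀ i, C'.comp (T i) = (T i).comp C')
    -- `D` is the positive square root `(CC')^{1/2}`
    (hD2 : D.comp D = C.comp C')
    (hDsa : ∀ x y : H, (inner A (D x) y : A) = inner A x (D y))
    (m : ℝ) (hm : 0 < m)
    (hmD : ∀ x : H, m • (inner A x x : A) ≤ inner A (D x) (D x))
    (a b : ℝ)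
    (hframe : ∀ x : H,
      a • (inner A (Ks x) (Ks x) : A) ≤ ∑' i, (inner A (T i x) (T i x) : A) ∧
      ∑' i, (inner A (T i x) (T i x) : A) ≤ b • inner A x x) :
    ∀ x : H,
      (a * m) • (inner A (Ks x) (Ks x) : A) ≤
        ∑' i, (inner A (T i (C x)) (T i (C' x)) : A) ∧
      ∑' i, (inner A (T i (C x)) (T i (C' x)) : A) ≤ (b * ‖D‖ ^ 2) • inner A x x := by
  intro x
  have hcontrol : ∀ i,
      (inner A (T i (C x)) (T i (C' x)) : A) = inner A (D (T i x)) (D (T i x)) := fun i => by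
    rw [← ContinuousLinearMap.comp_apply, ← hCT, ← ContinuousLinearMap.comp_apply (T i), ← hC'T]
    exact IsAdjointOf.inner_apply_apply_eq_inner_apply_self hC.2.1 hDsa hD2 _
  simp only [hcontrol]
  obtain ⟨hlower, hupper⟩ := smul_tsum_le_tsum_and_tsum_le_smul_tsum hm
    (fun i => CStarModule.inner_self_nonneg) (fun i => hmD (T i x))
    (fun i => IsAdjointOf.inner_apply_self_le_norm_sq_smul hDsa (T i x))
  obtain ⟨hframe_lower, hframe_upper⟩ := hframe x
  constructor
  · calc (a * m) • (inner A (Ks x) (Ks x) : A) = m • a • inner A (Ks x) (Ks x) := by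
          rw [smul_smul, mul_comm]
      _ ≤ m • ∑' i, (inner A (T i x) (T i x) : A) :=
          smul_le_smul_of_nonneg_left hframe_lower hm.le
      _ ≤ _ := hlower
  · calc _ ≤ ‖D‖ ^ 2 • ∑' i, (inner A (T i x) (T i x) : A) := hupper
      _ ≤ ‖D‖ ^ 2 • b • inner A x x := smul_le_smul_of_nonneg_left hframe_upper (sq_nonneg _)
      _ = (b * ‖D‖ ^ 2) • inner A x x := by rw [smul_smul, mul_comm]

/-- a `K`-operator frame whose operators commute with `C, C' ∈ GL⁺(H)`
is a `(C,C')`-controlled `K`-operator frame with bounds `A·m` and `B·‖(CC')^{1/2}‖²`,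
where `D = (CC')^{1/2}` and `m` is a lower bound of `D` w.r.t. the inner product. -/
theorem stmt_2 {ι : Type*} (C C' K Ks D : H →L[ℂ] H) (T : ι → H →L[ℂ] H)
    (hC : MemGLPlus (A := A) C) (hC' : MemGLPlus (A := A) C')
    (hK : IsAdjointOf (A := A) K Ks)
    (hCC' : C.comp C' = C'.comp C)
    (hCT : ∀ i, C.comp (T i) = (T i).comp C)
    (hC'T : ∀ i, C'.comp (T i) = (T i).comp C')
    (hCK : C.comp K = K.comp C) (hC'K : C'.comp K = K.comp C')
    -- `D` is the positive square root `(CC')^{1/2}`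
    (hD2 : D.comp D = C.comp C')
    (hDsa : ∀ x y : H, (inner A (D x) y : A) = inner A x (D y))
    (hDpos : ∀ x : H, (0 : A) ≤ inner A x (D x))
    (m : ℝ) (hm : 0 < m)
    (hmD : ∀ x : H, m • (inner A x x : A) ≤ inner A (D x) (D x))
    (a b : ℝ) (ha : 0 < a) (hb : 0 < b)
    (hframe : ∀ x : H,
      a • (inner A (Ks x) (Ks x) : A) ≤ ∑' i, (inner A (T i x) (T i x) : A) ∧
      ∑' i, (inner A (T i x) (T i x) : A) ≤ b • inner A x x) :
    ∀ x : H,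
      (a * m) • (inner A (Ks x) (Ks x) : A) ≤
        ∑' i, (inner A (T i (C x)) (T i (C' x)) : A) ∧
      ∑' i, (inner A (T i (C x)) (T i (C' x)) : A) ≤ (b * ‖D‖ ^ 2) • inner A x x :=
  stmt_2_general C C' Ks D T hC hCT hC'T hD2 hDsa m hm hmD a b hframe
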